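/- Let α ∈ (0,1], let Δ ≥ 0 and a ≥ 1 be constants, and let ν₂(n) = #{0 ≤ k ≤ n : Xₖ = 2} denote the number of visits of the Wang–Landau process to state 2 up to time n included. Then, almost surely on the event {T⁰₁→₂ > a}, for every n such that ν₂(n) ≤ Δ one has: if α ∈ (0,1), θ̃ₙ(2) ≤ exp( (γ⋆/(1−α))·⌊a⌋^{1−α}·( ((⌈a+Δ⌉+1)/⌊a⌋)^{1−α} − 1 ) ); and if α = 1, θ̃ₙ(2) ≤ ((⌈a+Δ⌉+1)/⌊a⌋)^{γ⋆}. -/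

import Mathlib

open MeasureTheory ProbabilityTheory Filter Real Set Topology

noncomputable section

/-- The state space: index `0` is state "1", index `1` is state "2", index `2` is state "3". -/
abbrev WLState := Fin 3

/-- First passage time of the trajectory `ω` to the state `s`
(with the convention `sInf ∅ = 0`). -/
def hitTime (s : WLState) (ω : ℕ → WLState) : ℕ := sInf {n : ℕ | ω n = s}

/-- A measure `μ` on trajectory space is the law of the (possibly path-dependent) Markov chain
with initial state `x0` and transition matrix `P x k` at time `k` given the past path `x`,
expressed through its cylinder probabilities. -/
def IsChainLaw (P : (ℕ → WLState) → ℕ → WLState → WLState → ℝ) (x0 : WLState)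
    (μ : Measure (ℕ → WLState)) : Prop :=
  ∀ (n : ℕ) (x : ℕ → WLState),
    μ {ω : ℕ → WLState | ∀ k ≤ n, ω k = x k} =
      (if x 0 = x0 then (1 : ENNReal) else 0) *
        ∏ k ∈ Finset.range n, ENNReal.ofReal (P x k (x k) (x (k + 1)))

/-- The unnormalized Wang-Landau weight `θ̃ₙ(i)` along the path `x`, with step sizes
`γₖ = γs k^(-α)`: it satisfies `θ̃₀ = (1,1,1)` and `θ̃ₙ₊₁(i) = θ̃ₙ(i)(1 + γₙ₊₁ 1_{xₙ₊₁ = i})`. -/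
def wtilde (γs α : ℝ) (x : ℕ → WLState) (n : ℕ) (i : WLState) : ℝ :=
  ∏ k ∈ Finset.Icc 1 n, (1 + if x k = i then γs * (k : ℝ) ^ (-α) else 0)

/-- The normalized Wang-Landau weight `θₙ(i)` along the path `x`. -/
def thetaNorm (γs α : ℝ) (x : ℕ → WLState) (n : ℕ) (i : WLState) : ℝ :=
  wtilde γs α x n i / ∑ j, wtilde γs α x n j

/-- The Metropolis transition matrix `P_θ` biased by the weight vector `θ`. -/
def PWL (ε : ℝ) (θ : WLState → ℝ) : WLState → WLState → ℝ :=
  ![![1 - 1 / 3 * min (ε * θ 0 / θ 1) 1, 1 / 3 * min (ε * θ 0 / θ 1) 1, 0],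
    ![1 / 3 * min (θ 1 / (ε * θ 0)) 1,
      1 - 1 / 3 * min (θ 1 / (ε * θ 0)) 1 - 1 / 3 * min (θ 1 / (ε * θ 2)) 1,
      1 / 3 * min (θ 1 / (ε * θ 2)) 1],
    ![0, 1 / 3 * min (ε * θ 2 / θ 1) 1, 1 - 1 / 3 * min (ε * θ 2 / θ 1) 1]]

/-- `μ` is the law of the Wang-Landau process with parameters `ε`, `γs`, `α`,
started at state "1" (index 0). -/
def IsWLLaw (ε γs α : ℝ) (μ : Measure (ℕ → WLState)) : Prop :=
  IsChainLaw (fun x k => PWL ε (thetaNorm γs α x k)) 0 μ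

/-- `ν₂(n)`: the number of visits of the trajectory `ω` to state "2" (index 1)
up to time `n` included. -/
def nu2 (ω : ℕ → WLState) (n : ℕ) : ℕ :=
  ((Finset.range (n + 1)).filter fun k => ω k = 1).card

/-!
Up to time `n`, `θ̃(2)` has been multiplied by `1 + γ⋆ k^{-α} ≤ exp (γ⋆ k^{-α})` once for each
visit time `k` to state 2. On `{T⁰₁→₂ > a}` these `m ≤ Δ` times all exceed `b = ⌊a⌋`, so
the `i`-th of them is at least `b + i` and, `x ↦ x^{-α}` being decreasing,
`∑ k^{-α} ≤ ∑_{i=1}^{m} (b + i)^{-α} ≤ ∫_b^{⌈a+Δ⌉+1} x^{-α} dx`, which evaluates to the stated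
bound. The estimate holds along every trajectory.
-/

lemma wtilde_le_exp_sum {γs : ℝ} (hγs : 0 ≤ γs) (α : ℝ) (x : ℕ → WLState) (n : ℕ)
    (i : WLState) :
    wtilde γs α x n i ≤
      Real.exp (γs * ∑ k ∈ (Finset.Icc 1 n).filter (x · = i), (k : ℝ) ^ (-α)) := by
  rw [Finset.mul_sum, Finset.sum_filter, Real.exp_sum, wtilde]
  refine Finset.prod_le_prod (fun k _ => ?_) (fun k _ => ?_)
  · split_ifs <;> positivity
  · rw [add_comm]
    exact Real.add_one_le_exp _

lemma Finset.sum_le_sum_range_of_antitoneOn {β : Type*} [AddCommMonoid β] [PartialOrder β]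
    [IsOrderedAddMonoid β] {f : ℕ → β} {b : ℕ} (hf : AntitoneOn f (Set.Ioi b))
    (S : Finset ℕ) (hS : ∀ k ∈ S, b < k) :
    ∑ k ∈ S, f k ≤ ∑ i ∈ Finset.range S.card, f (b + (i + 1)) := by
  induction S using Finset.induction_on_max with
  | empty => simp
  | insert c S hc ih =>
    have hcS : c ∉ S := fun h => (hc c h).false
    have hbc : b < c := hS c (Finset.mem_insert_self c S)
    have hcard : b + (S.card + 1) ≤ c := by
      have := Finset.card_le_card (fun k hk => Finset.mem_Ioo.2
        ⟨hS k (Finset.mem_insert_of_mem hk), hc k hk⟩ : S ⊆ Finset.Ioo b c)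
      simp only [Nat.card_Ioo] at this
      omega
    rw [Finset.sum_insert hcS, Finset.card_insert_of_notMem hcS, Finset.sum_range_succ,
      add_comm]
    exact add_le_add (ih fun k hk => hS k (Finset.mem_insert_of_mem hk))
      (hf (by simp only [Set.mem_Ioi]; omega) hbc hcard)

lemma sum_rpow_neg_le_integral {α : ℝ} (hα : 0 ≤ α) {b : ℕ} (hb : 0 < b) (S : Finset ℕ)
    (hS : ∀ k ∈ S, b < k) {C : ℝ} (hC : (b : ℝ) + S.card ≤ C) :
    ∑ k ∈ S, (k : ℝ) ^ (-α) ≤ ∫ x in (b : ℝ)..C, x ^ (-α) := by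
  have hb' : (0 : ℝ) < b := Nat.cast_pos.2 hb
  have hanti : AntitoneOn (fun x : ℝ => x ^ (-α)) (Set.Ioi 0) := fun x hx y _ hxy =>
    Real.rpow_le_rpow_of_nonpos hx hxy (neg_nonpos.2 hα)
  calc ∑ k ∈ S, (k : ℝ) ^ (-α)
      ≤ ∑ i ∈ Finset.range S.card, (((b + (i + 1) : ℕ) : ℝ)) ^ (-α) :=
        Finset.sum_le_sum_range_of_antitoneOn
          (fun x hx y hy hxy => hanti (Set.mem_Ioi.2 (Nat.cast_pos.2 (hb.trans hx)))
            (Set.mem_Ioi.2 (Nat.cast_pos.2 (hb.trans hy))) (Nat.cast_le.2 hxy)) S hS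
    _ = ∑ i ∈ Finset.range S.card, ((b : ℝ) + ((i + 1 : ℕ) : ℝ)) ^ (-α) := by push_cast; rfl
    _ ≤ ∫ x in (b : ℝ)..b + S.card, x ^ (-α) :=
        AntitoneOn.sum_le_integral (hanti.mono fun x hx => hb'.trans_le hx.1)
    _ ≤ ∫ x in (b : ℝ)..C, x ^ (-α) := by
        have hbC : (b : ℝ) ≤ C := by linarith [(Nat.cast_nonneg S.card : (0 : ℝ) ≤ _)]
        refine intervalIntegral.integral_mono_interval le_rfl (by simp) hC
          (ae_restrict_of_forall_mem measurableSet_Ioc fun x hx =>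
            Real.rpow_nonneg (hb'.trans hx.1).le _)
          (intervalIntegral.intervalIntegrable_rpow (Or.inr ?_))
        exact Set.notMem_uIcc_of_lt hb' (hb'.trans_le hbC)

lemma exp_mul_integral_rpow_neg_of_lt_one {α : ℝ} (hα : α < 1) (γs : ℝ) {b C : ℝ}
    (hb : 0 < b) (hC : 0 ≤ C) :
    Real.exp (γs * ∫ x in b..C, x ^ (-α)) =
      Real.exp (γs / (1 - α) * b ^ (1 - α) * ((C / b) ^ (1 - α) - 1)) := by
  have h1α : 1 - α ≠ 0 := by linarith
  rw [integral_rpow (Or.inl (by linarith)), neg_add_eq_sub, Real.div_rpow hC hb.le]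
  have := (Real.rpow_pos_of_pos hb (1 - α)).ne'
  field_simp

lemma exp_mul_integral_rpow_neg_one (γs : ℝ) {b C : ℝ} (hb : 0 < b) (hC : 0 < C) :
    Real.exp (γs * ∫ x in b..C, x ^ (-1 : ℝ)) = (C / b) ^ γs := by
  simp only [Real.rpow_neg_one, integral_inv_of_pos hb hC]
  rw [Real.rpow_def_of_pos (div_pos hC hb), mul_comm]

theorem stmt17_general (γs α : ℝ) (hγs : 0 < γs) (hα : 0 < α) (hα1 : α ≤ 1)
    (μ : Measure (ℕ → WLState))
    (Δ a : ℝ) (ha : 1 ≤ a) :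
    ∀ᵐ ω ∂μ, a < (hitTime 1 ω : ℝ) →
      ∀ n : ℕ, (nu2 ω n : ℝ) ≤ Δ →
        wtilde γs α ω n 1 ≤
          if α < 1 then
            Real.exp (γs / (1 - α) * (⌊a⌋₊ : ℝ) ^ (1 - α) *
              ((((⌈a + Δ⌉₊ : ℝ) + 1) / (⌊a⌋₊ : ℝ)) ^ (1 - α) - 1))
          else (((⌈a + Δ⌉₊ : ℝ) + 1) / (⌊a⌋₊ : ℝ)) ^ γs := by
  refine Eventually.of_forall fun ω hhit n hnu => ?_
  set S := (Finset.Icc 1 n).filter (ω · = 1)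
  have hb : 0 < ⌊a⌋₊ := Nat.floor_pos.2 ha
  have hS : ∀ k ∈ S, ⌊a⌋₊ < k := fun k hk =>
    (Nat.floor_lt (by linarith)).2 <|
      hhit.trans_le (Nat.cast_le.2 (Nat.sInf_le (Finset.mem_filter.1 hk).2))
  have hSν : (S.card : ℝ) ≤ nu2 ω n := Nat.cast_le.2 <| Finset.card_le_card <|
    Finset.filter_subset_filter _ fun k hk => by simp at hk ⊢; omega
  have hC : (⌊a⌋₊ : ℝ) + S.card ≤ (⌈a + Δ⌉₊ : ℝ) + 1 := by
    linarith [Nat.floor_le (by linarith : 0 ≤ a), Nat.le_ceil (a + Δ)]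
  have hbound := (wtilde_le_exp_sum hγs.le α ω n 1).trans <| Real.exp_le_exp.2 <|
    mul_le_mul_of_nonneg_left (sum_rpow_neg_le_integral hα.le hb S hS hC) hγs.le
  split_ifs with h
  · rwa [exp_mul_integral_rpow_neg_of_lt_one h γs (Nat.cast_pos.2 hb) (by positivity)] at hbound
  · obtain rfl : α = 1 := hα1.antisymm (not_lt.1 h)
    rwa [exp_mul_integral_rpow_neg_one γs (Nat.cast_pos.2 hb) (by positivity)] at hbound

/-- For `α ∈ (0,1]`, `Δ ≥ 0` and `a ≥ 1`: almost surely, on the event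
`{T⁰₁→₂ > a}`, for every `n` with `ν₂(n) ≤ Δ`, the unnormalized weight `θ̃ₙ(2)` is bounded by
`exp((γ⋆/(1−α))·⌊a⌋^{1−α}·(((⌈a+Δ⌉+1)/⌊a⌋)^{1−α} − 1))` if `α ∈ (0,1)`, and by
`((⌈a+Δ⌉+1)/⌊a⌋)^{γ⋆}` if `α = 1`. -/
theorem stmt17 (γs α ε : ℝ) (hγs : 0 < γs) (hα : 0 < α) (hα1 : α ≤ 1)
    (hε : ε ∈ Set.Ioo (0 : ℝ) 1)
    (μ : Measure (ℕ → WLState)) [IsProbabilityMeasure μ]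
    (hμ : IsWLLaw ε γs α μ)
    (Δ a : ℝ) (hΔ : 0 ≤ Δ) (ha : 1 ≤ a) :
    ∀ᵐ ω ∂μ, a < (hitTime 1 ω : ℝ) →
      ∀ n : ℕ, (nu2 ω n : ℝ) ≤ Δ →
        wtilde γs α ω n 1 ≤
          if α < 1 then
            Real.exp (γs / (1 - α) * (⌊a⌋₊ : ℝ) ^ (1 - α) *
              ((((⌈a + Δ⌉₊ : ℝ) + 1) / (⌊a⌋₊ : ℝ)) ^ (1 - α) - 1))
          else (((⌈a + Δ⌉₊ : ℝ) + 1) / (⌊a⌋₊ : ℝ)) ^ γs :=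
  stmt17_general γs α hγs hα hα1 μ Δ a ha
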